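/- arXiv:math/9812108 — 3 statements merged into one kernel-verified Lean document; each statement's English description precedes it below -/
import Mathlib

section
/- Let 0 < q < 1 and p ∈ ℝ. The function 𝒥(√(pρ)) = ∑_{k=0}^∞ (-1)^k (pρ)^k/([k]!)^2 satisfies the q-difference equation (□ + p)𝒥(√(pρ)) = 0 for all ρ > 0, where □f(ρ) = D₋(ρ D₊ f)(ρ). -/
noncomputable def qNum (q : ℝ) (m : ℕ) : ℝ := (q ^ (m : ℤ) - q ^ (-(m : ℤ))) / (q - q⁻¹)

noncomputable def qFact (q : ℝ) (k : ℕ) : ℝ := ∏ m ∈ Finset.Icc 1 k, qNum q m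

noncomputable def Dplus (q : ℝ) (f : ℝ → ℝ) (x : ℝ) : ℝ :=
  (f x - f (q ^ 2 * x)) / ((1 - q ^ 2) * x)

noncomputable def Dminus (q : ℝ) (f : ℝ → ℝ) (x : ℝ) : ℝ :=
  (f x - f (q ^ (-2 : ℤ) * x)) / ((1 - q ^ (-2 : ℤ)) * x)

noncomputable def Box (q : ℝ) (f : ℝ → ℝ) : ℝ → ℝ :=
  Dminus q (fun x => x * Dplus q f x)

/-! On a monomial, `□ (y ^ (k + 1)) = [k + 1] ^ 2 * y ^ k`, because
`(1 - t)(1 - t⁻¹) = -(√t - √t⁻¹) ^ 2` for `t = q ^ 2` and `t = q ^ (2k + 2)`. Since `□ f (x)` only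
involves the values of `f` at `x`, `q² x` and `q⁻² x`, it commutes with the (everywhere convergent)
series, and the factor `[k + 1] ^ 2` cancels against `([k + 1]!) ^ 2`, turning the `k + 1`-st term
of `□ 𝒥` into `-p` times the `k`-th term of `𝒥`. -/

open Filter

variable {q : ℝ}

lemma qNum_eq (m : ℕ) : qNum q m = (q ^ m - (q ^ m)⁻¹) / (q - q⁻¹) := by
  rw [qNum, zpow_neg, zpow_natCast]

lemma qNum_pos (hq0 : 0 < q) (hq1 : q < 1) {m : ℕ} (hm : m ≠ 0) : 0 < qNum q m := by
  have hqm : q ^ m < 1 := pow_lt_one₀ hq0.le hq1 hm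
  rw [qNum_eq]
  exact div_pos_of_neg_of_neg
    (by linarith [(one_lt_inv₀ (pow_pos hq0 m)).mpr hqm])
    (by linarith [(one_lt_inv₀ hq0).mpr hq1])

lemma qFact_succ (q : ℝ) (k : ℕ) : qFact q (k + 1) = qFact q k * qNum q (k + 1) :=
  Finset.prod_Icc_succ_top (Nat.le_add_left 1 k) _

lemma qFact_pos (hq0 : 0 < q) (hq1 : q < 1) (k : ℕ) : 0 < qFact q k :=
  Finset.prod_pos fun _ hm =>
    qNum_pos hq0 hq1 (Nat.one_le_iff_ne_zero.mp (Finset.mem_Icc.mp hm).1)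

lemma tendsto_qNum_atTop (hq0 : 0 < q) (hq1 : q < 1) : Tendsto (qNum q) atTop atTop := by
  have hq : 1 < q⁻¹ := (one_lt_inv₀ hq0).mpr hq1
  have hlower : Tendsto (fun m : ℕ => (q⁻¹ ^ m - 1) / (q⁻¹ - q)) atTop atTop :=
    (tendsto_atTop_add_const_right _ _ (tendsto_pow_atTop_atTop_of_one_lt hq)).atTop_div_const
      (by linarith)
  refine tendsto_atTop_mono (fun m => ?_) hlower
  rw [qNum_eq, inv_pow, ← neg_div_neg_eq, neg_sub, neg_sub, ← inv_pow]
  exact div_le_div_of_nonpos_of_le (by linarith) (by linarith [pow_le_one₀ (n := m) hq0.le hq1.le])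

lemma summable_qBessel_term (hq0 : 0 < q) (hq1 : q < 1) (y : ℝ) :
    Summable fun k => (-1 : ℝ) ^ k * y ^ k / qFact q k ^ 2 := by
  refine summable_of_ratio_norm_eventually_le (r := 1 / 2) (by norm_num) ?_
  have hlarge : ∀ᶠ k : ℕ in atTop, 2 * |y| ≤ qNum q (k + 1) ^ 2 :=
    (((tendsto_pow_atTop two_ne_zero).comp (tendsto_qNum_atTop hq0 hq1)).comp
      (tendsto_add_atTop_nat 1)).eventually_ge_atTop _
  filter_upwards [hlarge] with k hk
  have hF := qFact_pos hq0 hq1 k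
  have hN := qNum_pos hq0 hq1 k.succ_ne_zero
  simp only [norm_div, norm_mul, norm_pow, norm_neg, norm_one, one_pow, one_mul,
    Real.norm_eq_abs, qFact_succ, mul_pow, pow_succ |y|, abs_of_pos hF, abs_of_pos hN]
  rw [div_le_iff₀ (by positivity)]
  field_simp
  nlinarith [pow_nonneg (abs_nonneg y) k]

lemma box_eq (hq : q ≠ 0) {x : ℝ} (hx : x ≠ 0) (f : ℝ → ℝ) :
    Box q f x = (2 * f x - f (q ^ 2 * x) - f ((q ^ 2)⁻¹ * x)) /
      ((1 - q ^ 2) * (1 - (q ^ 2)⁻¹) * x) := by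
  have hq2 : q ^ (-2 : ℤ) = (q ^ 2)⁻¹ := by rw [zpow_neg]; norm_cast
  have hcancel : q ^ 2 * ((q ^ 2)⁻¹ * x) = x := by field_simp
  simp only [Box, Dminus, Dplus, hq2, hcancel]
  field_simp
  ring

lemma box_const_mul_pow_succ (hq : q ≠ 0) (hq2 : q ^ 2 ≠ 1) {x : ℝ} (hx : x ≠ 0)
    (c : ℝ) (k : ℕ) :
    Box q (fun y => c * y ^ (k + 1)) x = c * qNum q (k + 1) ^ 2 * x ^ k := by
  have hqq : q - q⁻¹ ≠ 0 := by
    rw [sub_ne_zero]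
    contrapose! hq2
    field_simp at hq2
    linarith
  rw [box_eq hq hx, qNum_eq]
  simp only [mul_pow, ← pow_mul, inv_pow]
  field_simp
  ring

lemma hasSum_box {f : ℕ → ℝ → ℝ} (hq : q ≠ 0) {x : ℝ} (hx : x ≠ 0)
    (h₁ : Summable (f · x)) (h₂ : Summable (f · (q ^ 2 * x)))
    (h₃ : Summable (f · ((q ^ 2)⁻¹ * x))) :
    HasSum (fun k => Box q (f k) x) (Box q (fun y => ∑' k, f k y) x) := by
  simp only [box_eq hq hx]
  exact (((h₁.hasSum.mul_left 2).sub h₂.hasSum).sub h₃.hasSum).div_const _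

lemma box_const (q c x : ℝ) : Box q (fun _ => c) x = 0 := by
  simp [Box, Dplus, Dminus]

lemma box_qBessel_term_succ (hq0 : 0 < q) (hq1 : q < 1) (p : ℝ) {x : ℝ} (hx : x ≠ 0) (k : ℕ) :
    Box q (fun y => (-1 : ℝ) ^ (k + 1) * (p * y) ^ (k + 1) / qFact q (k + 1) ^ 2) x =
      -p * ((-1 : ℝ) ^ k * (p * x) ^ k / qFact q k ^ 2) := by
  have hq2 : q ^ 2 ≠ 1 := by nlinarith
  have hF := (qFact_pos hq0 hq1 k).ne'
  have hN := (qNum_pos hq0 hq1 k.succ_ne_zero).ne'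
  have hmonomial : (fun y => (-1 : ℝ) ^ (k + 1) * (p * y) ^ (k + 1) / qFact q (k + 1) ^ 2) =
      fun y => (-1) ^ (k + 1) * p ^ (k + 1) / qFact q (k + 1) ^ 2 * y ^ (k + 1) := by
    ext y; ring
  rw [hmonomial, box_const_mul_pow_succ hq0.ne' hq2 hx, qFact_succ]
  field_simp
  ring

/-- The q-Bessel function `𝒥(√(pρ)) = ∑ (-1)^k (pρ)^k/([k]!)²` satisfies
`(□ + p) 𝒥(√(pρ)) = 0` for all `ρ > 0`. -/
theorem qBessel_solves_box_eq (q : ℝ) (hq0 : 0 < q) (hq1 : q < 1) (p : ℝ) :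
    ∀ ρ : ℝ, 0 < ρ →
      Box q (fun x => ∑' k : ℕ, (-1 : ℝ) ^ k * (p * x) ^ k / (qFact q k) ^ 2) ρ +
        p * (∑' k : ℕ, (-1 : ℝ) ^ k * (p * ρ) ^ k / (qFact q k) ^ 2) = 0 := by
  intro ρ hρ
  have hsum (x : ℝ) := summable_qBessel_term hq0 hq1 (p * x)
  have hbox := hasSum_box (f := fun k x => (-1 : ℝ) ^ k * (p * x) ^ k / qFact q k ^ 2)
    hq0.ne' hρ.ne' (hsum ρ) (hsum _) (hsum _)
  rw [← hasSum_nat_add_iff' 1] at hbox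
  simp only [box_qBessel_term_succ hq0 hq1 p hρ.ne', Finset.range_one, Finset.sum_singleton,
    pow_zero, one_mul, box_const, sub_zero] at hbox
  rw [← hbox.tsum_eq, tsum_mul_left]
  ring
end

section
/- Let 0 < q < 1 and let f : [0,∞) → ℝ be continuous at 0 with D₊f extendable continuously to 0 (q-Taylor hypothesis). Then lim_{n→∞} ∑_{j=-∞}^{n} j·(2f(q^{2j}) - f(q^{2(j+1)}) - f(q^{2(j-1)})) = f(0), assuming the doubly infinite sum converges absolutely for each n (e.g., f(q^{2j}) → 0 fast enough as j → -∞). -/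
open Filter Finset

noncomputable def ddsT (q : ℝ) (f : ℝ → ℝ) (j : ℤ) : ℝ :=
  (j : ℝ) * (2 * f (q ^ (2 * j)) - f (q ^ (2 * (j + 1))) - f (q ^ (2 * (j - 1))))

noncomputable def ddsH (q : ℝ) (f : ℝ → ℝ) (j : ℤ) : ℝ :=
  ((j : ℝ) + 1) * f (q ^ (2 * j)) - (j : ℝ) * f (q ^ (2 * (j + 1)))

lemma ddsT_eq (q : ℝ) (f : ℝ → ℝ) (j : ℤ) :
    ddsT q f j = ddsH q f j - ddsH q f (j - 1) := by
  unfold ddsT ddsH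
  rw [show (j - 1 + 1 : ℤ) = j by ring]
  push_cast
  ring

lemma ddsH_tendsto_atBot (q : ℝ) (f : ℝ → ℝ)
    (hdecay : Tendsto (fun j : ℤ => f (q ^ (2 * j))) atBot (nhds 0))
    (hs0 : Summable fun j : ℤ => if j ≤ 0 then |ddsT q f j| else 0) :
    Tendsto (ddsH q f) atBot (nhds 0) := by
  have hinj : Function.Injective (fun k : ℕ => -(k : ℤ)) := by
    intro a b hab
    simpa using hab
  have hsum : Summable (fun k : ℕ => ddsT q f (-(k : ℤ))) := by
    have h2 := hs0.comp_injective hinj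
    have h3 : Summable (fun k : ℕ => |ddsT q f (-(k : ℤ))|) := by
      refine h2.congr fun k => ?_
      simp [Function.comp]
    exact h3.of_abs
  set u : ℕ → ℝ := fun k => ddsH q f (-(k : ℤ)) with hu
  have hterm : ∀ k : ℕ, ddsT q f (-(k : ℤ)) = u k - u (k + 1) := by
    intro k
    rw [ddsT_eq]
    simp only [hu]
    congr 2
    push_cast
    ring
  have hps : ∀ K : ℕ, ∑ k ∈ range K, ddsT q f (-(k : ℤ)) = u 0 - u K := by
    intro K
    rw [← Finset.sum_range_sub' u K]
    exact Finset.sum_congr rfl fun k _ => hterm k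
  have hTS := hsum.hasSum.tendsto_sum_nat
  set T := ∑' k : ℕ, ddsT q f (-(k : ℤ)) with hT
  have h4 : Tendsto (fun K : ℕ => u 0 - u K) atTop (nhds T) := by
    refine hTS.congr fun K => hps K
  have h5 : Tendsto u atTop (nhds (u 0 - T)) := by
    have := (tendsto_const_nhds (x := u 0) (f := atTop (α := ℕ))).sub h4
    simpa using this
  set L := u 0 - T with hL
  -- Cesàro argument to show L = 0
  set A : ℕ → ℝ := fun k => f (q ^ (2 * (-(k : ℤ)))) with hA
  have hnegcast : Tendsto (fun k : ℕ => -(k : ℤ)) atTop atBot :=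
    tendsto_neg_atTop_atBot.comp tendsto_natCast_atTop_atTop
  have hA0 : Tendsto A atTop (nhds 0) := hdecay.comp hnegcast
  set b : ℕ → ℝ := fun k => u (k + 1) with hb
  have hbL : Tendsto b atTop (nhds L) := h5.comp (tendsto_add_atTop_nat 1)
  set c : ℕ → ℝ := fun k => A (k + 1) + A k with hcdef
  have hc0 : Tendsto c atTop (nhds 0) := by
    have := (hA0.comp (tendsto_add_atTop_nat 1)).add hA0
    simpa using this
  set w : ℕ → ℝ := fun k => (-(k : ℤ) : ℝ) * A k with hw
  have hbc : ∀ k : ℕ, b k - c k = w (k + 1) - w k := by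
    intro k
    simp only [hb, hcdef, hw, hu, hA, ddsH]
    have e1 : (-(((k : ℕ) + 1 : ℕ)) : ℤ) = -(k : ℤ) - 1 := by push_cast; ring
    rw [e1, show ((-(k : ℤ) - 1) + 1 : ℤ) = -(k : ℤ) by ring]
    push_cast
    ring
  have hSbc : ∀ N : ℕ, ∑ k ∈ range N, (b k - c k) = w N := by
    intro N
    rw [Finset.sum_congr rfl fun k _ => hbc k, Finset.sum_range_sub w N]
    simp [hw]
  have hces := (hbL.cesaro).sub (hc0.cesaro)
  have heq : ∀ᶠ N : ℕ in atTop,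
      ((N : ℝ)⁻¹ • ∑ k ∈ range N, b k) - ((N : ℝ)⁻¹ • ∑ k ∈ range N, c k) = -A N := by
    filter_upwards [eventually_ge_atTop 1] with N hN
    have hN0 : (N : ℝ) ≠ 0 := Nat.cast_ne_zero.mpr (by omega)
    rw [smul_eq_mul, smul_eq_mul, ← mul_sub, ← Finset.sum_sub_distrib, hSbc]
    simp only [hw]
    push_cast
    field_simp
  have hnegA : Tendsto (fun N : ℕ => -A N) atTop (nhds 0) := by
    simpa using hA0.neg
  have hL0 : L - 0 = 0 := tendsto_nhds_unique (hces.congr' heq) hnegA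
  have hLz : L = 0 := by linarith
  rw [hLz] at h5
  have hmap : (atBot : Filter ℤ) = Filter.map (fun k : ℕ => -(k : ℤ)) atTop := by
    calc (atBot : Filter ℤ) = Filter.map Neg.neg atTop := Filter.map_neg_atTop.symm
      _ = Filter.map Neg.neg (Filter.map Nat.cast atTop) := by rw [Nat.map_cast_int_atTop]
      _ = Filter.map (fun k : ℕ => -(k : ℤ)) atTop := Filter.map_map
  rw [hmap, Filter.tendsto_map'_iff]
  exact h5

lemma ddsH_tsum (q : ℝ) (f : ℝ → ℝ) (n : ℤ)
    (hbot : Tendsto (ddsH q f) atBot (nhds 0))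
    (hsn : Summable fun j : ℤ => if j ≤ n then |ddsT q f j| else 0) :
    (∑' j : ℤ, if j ≤ n then ddsT q f j else 0) = ddsH q f n := by
  set F : ℤ → ℝ := fun j => if j ≤ n then ddsT q f j else 0 with hF
  have hFs : Summable F := by
    refine Summable.of_abs (hsn.congr fun j => ?_)
    simp only [hF]
    split_ifs with h
    · rfl
    · simp
  have hinj : Function.Injective (fun k : ℕ => n - (k : ℤ)) := by
    intro a b hab
    simp only at hab
    omega
  have hsupp : Function.support F ⊆ Set.range (fun k : ℕ => n - (k : ℤ)) := by
    intro j hj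
    have hjn : j ≤ n := by
      by_contra hcon
      exact hj (if_neg hcon)
    exact ⟨(n - j).toNat, by simp [Int.toNat_of_nonneg (sub_nonneg.2 hjn)]⟩
  have h1 : ∑' k : ℕ, F (n - (k : ℤ)) = ∑' j : ℤ, F j := hinj.tsum_eq hsupp
  have h2 : ∀ k : ℕ, F (n - (k : ℤ)) = ddsT q f (n - (k : ℤ)) := fun k => if_pos (by omega)
  have hsum2 : Summable (fun k : ℕ => ddsT q f (n - (k : ℤ))) :=
    (hFs.comp_injective hinj).congr h2
  set w : ℕ → ℝ := fun k => ddsH q f (n - (k : ℤ)) with hw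
  have hterm : ∀ k : ℕ, ddsT q f (n - (k : ℤ)) = w k - w (k + 1) := by
    intro k
    rw [ddsT_eq]
    simp only [hw]
    congr 2
    push_cast
    ring
  have hps : ∀ K : ℕ, ∑ k ∈ range K, ddsT q f (n - (k : ℤ)) = w 0 - w K := by
    intro K
    rw [← Finset.sum_range_sub' w K]
    exact Finset.sum_congr rfl fun k _ => hterm k
  have hTS := hsum2.hasSum.tendsto_sum_nat
  have h4 : Tendsto (fun K : ℕ => w 0 - w K) atTop
      (nhds (∑' k : ℕ, ddsT q f (n - (k : ℤ)))) := hTS.congr hps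
  have hwbot : Tendsto (fun K : ℕ => n - (K : ℤ)) atTop atBot := by
    have h6 : Tendsto (fun K : ℕ => -(K : ℤ)) atTop atBot :=
      tendsto_neg_atTop_atBot.comp tendsto_natCast_atTop_atTop
    simpa [sub_eq_add_neg] using tendsto_atBot_add_const_left atTop (n : ℤ) h6
  have h5 : Tendsto (fun K : ℕ => w 0 - w K) atTop (nhds (w 0 - 0)) :=
    tendsto_const_nhds.sub (hbot.comp hwbot)
  have h7 : (∑' k : ℕ, ddsT q f (n - (k : ℤ))) = w 0 := by
    simpa using tendsto_nhds_unique h4 h5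
  have h8 : (∑' k : ℕ, F (n - (k : ℤ))) = w 0 := by
    rw [tsum_congr h2, h7]
  rw [← h1, h8]
  simp [hw]

lemma ddsH_tendsto_atTop (q : ℝ) (hq0 : 0 < q) (hq1 : q < 1) (f : ℝ → ℝ)
    (hc : ContinuousAt f 0) (hd : DifferentiableAt ℝ f 0) :
    Tendsto (ddsH q f) atTop (nhds (f 0)) := by
  have hmapT : (atTop : Filter ℤ) = Filter.map (Nat.cast : ℕ → ℤ) atTop :=
    Nat.map_cast_int_atTop.symm
  rw [hmapT, Filter.tendsto_map'_iff]
  set r := q ^ 2 with hr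
  have hr0 : 0 < r := by positivity
  have hr1 : r < 1 := by
    calc r = q ^ 2 := rfl
      _ < 1 := pow_lt_one₀ hq0.le hq1 two_ne_zero
  have hx : ∀ k : ℕ, q ^ (2 * (k : ℤ)) = r ^ k := by
    intro k
    rw [show (2 * (k : ℤ)) = ((2 * k : ℕ) : ℤ) by push_cast; ring, zpow_natCast, pow_mul]
  have hx' : ∀ k : ℕ, q ^ (2 * ((k : ℤ) + 1)) = r ^ (k + 1) := by
    intro k
    rw [show (2 * ((k : ℤ) + 1)) = ((2 * (k + 1) : ℕ) : ℤ) by push_cast; ring,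
      zpow_natCast, pow_mul]
  have hgoal_eq : ((ddsH q f) ∘ (Nat.cast : ℕ → ℤ)) =
      fun k : ℕ => ((k : ℝ) + 1) * f (r ^ k) - (k : ℝ) * f (r ^ (k + 1)) := by
    funext k
    simp only [Function.comp, ddsH, hx, hx']
    push_cast
    ring
  rw [hgoal_eq]
  have hrpow : Tendsto (fun k : ℕ => r ^ k) atTop (nhds 0) :=
    tendsto_pow_atTop_nhds_zero_of_lt_one hr0.le hr1
  have hfA : Tendsto (fun k : ℕ => f (r ^ k)) atTop (nhds (f 0)) := hc.tendsto.comp hrpow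
  have hslope : Tendsto (slope f 0) (nhdsWithin 0 {(0:ℝ)}ᶜ) (nhds (deriv f 0)) :=
    hasDerivAt_iff_tendsto_slope.mp hd.hasDerivAt
  have hne : ∀ k : ℕ, r ^ k ≠ 0 := fun k => (pow_pos hr0 k).ne'
  have hmem : Tendsto (fun k : ℕ => r ^ k) atTop (nhdsWithin 0 {(0:ℝ)}ᶜ) :=
    tendsto_nhdsWithin_of_tendsto_nhds_of_eventually_within _ hrpow
      (Eventually.of_forall fun k => hne k)
  have hs1 : Tendsto (fun k : ℕ => slope f 0 (r ^ k)) atTop (nhds (deriv f 0)) :=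
    hslope.comp hmem
  have hs2 : Tendsto (fun k : ℕ => slope f 0 (r ^ (k + 1))) atTop (nhds (deriv f 0)) :=
    hslope.comp (hmem.comp (tendsto_add_atTop_nat 1))
  have hk1 : Tendsto (fun k : ℕ => (k : ℝ) * r ^ k) atTop (nhds 0) :=
    tendsto_self_mul_const_pow_of_lt_one hr0.le hr1
  have hk2 : Tendsto (fun k : ℕ => (k : ℝ) * r ^ (k + 1)) atTop (nhds 0) := by
    have := hk1.mul_const r
    simpa [pow_succ, mul_assoc] using this
  have hcomb := hfA.add ((hk1.mul hs1).sub (hk2.mul hs2))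
  have hcomb' : Tendsto (fun k : ℕ => f (r ^ k) +
      ((k : ℝ) * r ^ k * slope f 0 (r ^ k) - (k : ℝ) * r ^ (k + 1) * slope f 0 (r ^ (k + 1))))
      atTop (nhds (f 0)) := by
    simpa using hcomb
  refine hcomb'.congr fun k => ?_
  have e1 : slope f 0 (r ^ k) = (f (r ^ k) - f 0) / (r ^ k) := by
    rw [slope_def_field]; ring_nf
  have e2 : slope f 0 (r ^ (k + 1)) = (f (r ^ (k + 1)) - f 0) / (r ^ (k + 1)) := by
    rw [slope_def_field]; ring_nf
  rw [e1, e2]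
  field_simp
  ring

/-- For `f` continuous at `0`, differentiable at `0` (q-Taylor hypothesis), decaying at
infinity on the lattice, and with absolutely convergent partial sums, the limit of the
double-difference sums `∑_{j≤n} j(2f(q^{2j}) - f(q^{2(j+1)}) - f(q^{2(j-1)}))` is `f(0)`. -/
theorem double_difference_sum_tendsto (q : ℝ) (hq0 : 0 < q) (hq1 : q < 1) (f : ℝ → ℝ)
    (hc : ContinuousAt f 0) (hd : DifferentiableAt ℝ f 0)
    (hdecay : Filter.Tendsto (fun j : ℤ => f (q ^ (2 * j))) Filter.atBot (nhds 0))
    (hs : ∀ n : ℤ, Summable fun j : ℤ =>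
      if j ≤ n then
        |(j : ℝ) * (2 * f (q ^ (2 * j)) - f (q ^ (2 * (j + 1))) - f (q ^ (2 * (j - 1))))|
      else 0) :
    Filter.Tendsto
      (fun n : ℤ => ∑' j : ℤ,
        if j ≤ n then
          (j : ℝ) * (2 * f (q ^ (2 * j)) - f (q ^ (2 * (j + 1))) - f (q ^ (2 * (j - 1))))
        else 0)
      Filter.atTop (nhds (f 0)) := by
  have hs' : ∀ n : ℤ, Summable fun j : ℤ => if j ≤ n then |ddsT q f j| else 0 := by
    intro n
    exact (hs n).congr fun j => by simp only [ddsT]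
  have hbot := ddsH_tendsto_atBot q f hdecay (hs' 0)
  have htop := ddsH_tendsto_atTop q hq0 hq1 f hc hd
  refine htop.congr fun n => ?_
  have h1 := (ddsH_tsum q f n hbot (hs' n)).symm
  rw [h1]
  exact tsum_congr fun j => by simp only [ddsT]
end

section
/- Let 0 < q < 1. The delta functional δ on the q-lattice, defined by (δ, f) = f(0) := lim_{j→∞} f(q^{2j}) for f continuous at 0, is realized by: for any f with the q-Taylor property at 0, (□ log ρ, f) = (2q log q/(q - q^{-1})) f(0), where the pairing is the Jackson q²-integral and □ = D₋ ρ D₊. -/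
open Filter Real in
/-- The distributional identity `(□ log ρ, f) = (2q log q/(q - q^{-1})) f(0)`:
pairing `log` against `□f` with the Jackson q²-integral produces the delta
functional (up to the stated constant), for `f` continuous and differentiable at `0`
and decaying suitably on the lattice. -/
theorem box_log_is_delta (q : ℝ) (hq0 : 0 < q) (hq1 : q < 1) (f : ℝ → ℝ)
    (hc : ContinuousAt f 0) (hd : DifferentiableAt ℝ f 0)
    (hdecay : Filter.Tendsto (fun j : ℤ => f (q ^ (2 * j))) Filter.atBot (nhds 0))
    (hb : Filter.Tendsto (fun j : ℤ => (j : ℝ) * (f (q ^ (2 * j)) - f (q ^ (2 * j - 2))))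
      Filter.atBot (nhds 0))
    (hs : Summable fun j : ℤ => q ^ (2 * j) * |Real.log (q ^ (2 * j)) * Box q f (q ^ (2 * j))|) :
    (1 - q ^ 2) * ∑' j : ℤ, q ^ (2 * j) * (Real.log (q ^ (2 * j)) * Box q f (q ^ (2 * j))) =
      (2 * q * Real.log q / (q - q⁻¹)) * f 0 := by
  have hqne : q ≠ 0 := ne_of_gt hq0
  have hq2pos : (0:ℝ) < q ^ 2 := by positivity
  have hq2lt : q ^ 2 < 1 := by nlinarith
  have h1q2 : (1 : ℝ) - q ^ 2 ≠ 0 := by nlinarith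
  have hq2z : q ^ (2 : ℤ) = q ^ 2 := by norm_cast
  have hqm2 : q ^ (-2 : ℤ) = (q ^ 2)⁻¹ := by rw [zpow_neg, hq2z]
  have h1m2 : (1 : ℝ) - (q ^ 2)⁻¹ ≠ 0 := by
    have : 1 < (q ^ 2)⁻¹ := (one_lt_inv₀ hq2pos).mpr hq2lt
    linarith
  have hlogq : Real.log q ≠ 0 := ne_of_lt (Real.log_neg hq0 hq1)
  -- notation
  set F : ℤ → ℝ := fun j => f (q ^ (2 * j)) with hF
  set b : ℤ → ℝ := fun j => (F j - F (j + 1)) / (1 - q ^ 2) with hbdef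
  set u : ℤ → ℝ := fun j => (j : ℝ) * (b j - b (j - 1)) with hudef
  set C : ℝ := 2 * Real.log q / (1 - (q ^ 2)⁻¹) with hCdef
  have hCne : C ≠ 0 := by
    apply div_ne_zero _ h1m2
    simpa using hlogq
  -- the key pointwise identity
  have key : ∀ j : ℤ,
      q ^ (2 * j) * (Real.log (q ^ (2 * j)) * Box q f (q ^ (2 * j))) = C * u j := by
    intro j
    have e2 : q ^ (-2 : ℤ) * q ^ (2 * j) = q ^ (2 * (j - 1)) := by
      rw [show (2 * (j - 1) : ℤ) = -2 + 2 * j by ring, zpow_add₀ hqne]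
    have e1 : q ^ 2 * q ^ (2 * j) = q ^ (2 * (j + 1)) := by
      rw [show (2 * (j + 1) : ℤ) = 2 + 2 * j by ring, zpow_add₀ hqne, hq2z]
    have e3 : q ^ 2 * q ^ (2 * (j - 1)) = q ^ (2 * j) := by
      rw [show (2 * j : ℤ) = 2 + 2 * (j - 1) by ring, zpow_add₀ hqne, hq2z]
    have hlogx : Real.log (q ^ (2 * j)) = ((2 * j : ℤ) : ℝ) * Real.log q := Real.log_zpow q _
    simp only [hCdef, hudef, hbdef, hF]
    rw [show (j - 1 + 1 : ℤ) = j by ring]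
    simp only [Box, Dminus, Dplus]
    simp only [e2]
    simp only [e1, e3]
    simp only [hlogx, hqm2]
    have hx : q ^ (2 * j) ≠ 0 := zpow_ne_zero _ hqne
    have hxm : q ^ (2 * (j - 1)) ≠ 0 := zpow_ne_zero _ hqne
    generalize f (q ^ (2 * j)) = A
    generalize f (q ^ (2 * (j + 1))) = B
    generalize f (q ^ (2 * (j - 1))) = Cm
    generalize hX : q ^ (2 * j) = X at hx ⊢
    generalize hDD : q ^ (2 * (j - 1)) = D at hxm ⊢
    generalize hc1 : 1 - q ^ 2 = c1 at h1q2 ⊢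
    generalize hc2 : 1 - (q ^ 2)⁻¹ = c2 at h1m2 ⊢
    push_cast
    field_simp
  -- summability of u
  have hsu : Summable u := by
    have habs : ∀ j : ℤ,
        q ^ (2 * j) * |Real.log (q ^ (2 * j)) * Box q f (q ^ (2 * j))| = |C| * |u j| := by
      intro j
      have hpos : (0:ℝ) < q ^ (2 * j) := zpow_pos hq0 _
      calc q ^ (2 * j) * |Real.log (q ^ (2 * j)) * Box q f (q ^ (2 * j))|
          = |q ^ (2 * j) * (Real.log (q ^ (2 * j)) * Box q f (q ^ (2 * j)))| := by
            rw [abs_mul (q ^ (2 * j)) (Real.log (q ^ (2 * j)) * Box q f (q ^ (2 * j))),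
              abs_of_pos hpos]
        _ = |C * u j| := by rw [key j]
        _ = |C| * |u j| := abs_mul _ _
    have h1 : Summable (fun j : ℤ => |C| * |u j|) := by
      simpa only [habs] using hs
    have h2 : Summable (fun j : ℤ => |u j|) := by
      have h3 := h1.mul_left |C|⁻¹
      simpa [inv_mul_cancel_left₀ (abs_ne_zero.mpr hCne)] using h3
    exact h2.of_abs
  -- partial sums over symmetric intervals
  have hpart : ∀ n : ℕ, ∑ j ∈ Finset.Icc (-(n : ℤ)) (n : ℤ), u j
      = (n : ℝ) * b (n : ℤ) + (n : ℝ) * b (-(n : ℤ) - 1)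
        - (F (-(n : ℤ)) - F (n : ℤ)) / (1 - q ^ 2) := by
    intro n
    induction n with
    | zero => norm_num [hudef]
    | succ n ih =>
      have hset : Finset.Icc (-((n : ℤ) + 1)) ((n : ℤ) + 1)
          = insert (-(n : ℤ) - 1) (insert ((n : ℤ) + 1) (Finset.Icc (-(n : ℤ)) (n : ℤ))) := by
        ext x
        simp only [Finset.mem_Icc, Finset.mem_insert]
        omega
      have hnm1 : (-(n : ℤ) - 1) ∉ insert ((n : ℤ) + 1) (Finset.Icc (-(n : ℤ)) (n : ℤ)) := by
        simp only [Finset.mem_insert, Finset.mem_Icc]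
        omega
      have hnp1 : ((n : ℤ) + 1) ∉ Finset.Icc (-(n : ℤ)) (n : ℤ) := by
        simp only [Finset.mem_Icc]; omega
      push_cast
      rw [hset, Finset.sum_insert hnm1, Finset.sum_insert hnp1, ih]
      simp only [hudef, hbdef]
      push_cast
      ring_nf
  -- basic limits on the lattice
  have hq2n : ∀ n : ℕ, q ^ (2 * (n : ℤ)) = (q ^ 2) ^ n := by
    intro n
    rw [show (2 * (n : ℤ)) = ((2 * n : ℕ) : ℤ) by push_cast; ring, zpow_natCast, pow_mul]
  have hx0 : Tendsto (fun n : ℕ => q ^ (2 * (n : ℤ))) atTop (nhds 0) := by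
    simp only [hq2n]
    exact tendsto_pow_atTop_nhds_zero_of_lt_one hq2pos.le hq2lt
  have hnq : Tendsto (fun n : ℕ => (n : ℝ) * q ^ (2 * (n : ℤ))) atTop (nhds 0) := by
    simp only [hq2n]
    exact tendsto_self_mul_const_pow_of_lt_one hq2pos.le hq2lt
  -- slope limits
  have hslope : Tendsto (fun n : ℕ => (f (q ^ (2 * (n : ℤ))) - f 0) / q ^ (2 * (n : ℤ)))
      atTop (nhds (deriv f 0)) := by
    have hder := hd.hasDerivAt
    rw [hasDerivAt_iff_tendsto_slope] at hder
    have hxt : Tendsto (fun n : ℕ => q ^ (2 * (n : ℤ))) atTop (nhdsWithin 0 {(0:ℝ)}ᶜ) := by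
      apply tendsto_nhdsWithin_of_tendsto_nhds_of_eventually_within _ hx0
      exact Eventually.of_forall fun n => zpow_ne_zero _ hqne
    have h := hder.comp hxt
    simp only [Function.comp_def] at h
    simpa [slope_def_field] using h
  have hslope' : Tendsto
      (fun n : ℕ => (f (q ^ (2 * ((n : ℤ) + 1))) - f 0) / q ^ (2 * ((n : ℤ) + 1)))
      atTop (nhds (deriv f 0)) := by
    have h := hslope.comp (tendsto_add_atTop_nat 1)
    simp only [Function.comp_def] at h
    simpa [show ∀ n : ℕ, ((n + 1 : ℕ) : ℤ) = (n : ℤ) + 1 by intro n; push_cast; ring] using h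
  -- n * b n → 0
  have h1 : Tendsto (fun n : ℕ => (n : ℝ) * b (n : ℤ)) atTop (nhds 0) := by
    have heq : ∀ n : ℕ, (n : ℝ) * b (n : ℤ)
        = ((n : ℝ) * q ^ (2 * (n : ℤ)) * ((f (q ^ (2 * (n : ℤ))) - f 0) / q ^ (2 * (n : ℤ)))
          - ((n : ℝ) * q ^ (2 * (n : ℤ))) * (q ^ 2 *
            ((f (q ^ (2 * ((n : ℤ) + 1))) - f 0) / q ^ (2 * ((n : ℤ) + 1))))) / (1 - q ^ 2) := by
      intro n
      have hx : q ^ (2 * (n : ℤ)) ≠ 0 := zpow_ne_zero _ hqne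
      have e1 : q ^ 2 * q ^ (2 * (n : ℤ)) = q ^ (2 * ((n : ℤ) + 1)) := by
        rw [show (2 * ((n : ℤ) + 1) : ℤ) = 2 + 2 * (n : ℤ) by ring, zpow_add₀ hqne, hq2z]
      simp only [hbdef, hF]
      rw [← e1]
      generalize f (q ^ (2 * (n : ℤ))) = A
      generalize f (q ^ 2 * q ^ (2 * (n : ℤ))) = B
      generalize f 0 = z
      generalize hX : q ^ (2 * (n : ℤ)) = X at hx ⊢
      field_simp
      ring
    have hlim := ((hnq.mul hslope).sub
      (hnq.mul ((tendsto_const_nhds (x := q ^ 2)).mul hslope'))).div_const (1 - q ^ 2)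
    norm_num at hlim
    exact hlim.congr fun n => (heq n).symm
  -- n * b (-n-1) → 0
  have hnegZ : Tendsto (fun n : ℕ => -(n : ℤ)) atTop atBot :=
    tendsto_neg_atTop_atBot.comp tendsto_natCast_atTop_atTop
  have h2 : Tendsto (fun n : ℕ => (n : ℝ) * b (-(n : ℤ) - 1)) atTop (nhds 0) := by
    have hcomp := hb.comp hnegZ
    have h3 := hcomp.const_mul ((1 - q ^ 2)⁻¹)
    rw [mul_zero] at h3
    refine h3.congr fun n => ?_
    simp only [Function.comp_def, hbdef, hF]
    rw [show (2 * -(n : ℤ) - 2 : ℤ) = 2 * (-(n : ℤ) - 1) by ring,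
      show (-(n : ℤ) - 1 + 1 : ℤ) = -(n : ℤ) by ring]
    generalize f (q ^ (2 * (-(n : ℤ) - 1))) = A
    generalize f (q ^ (2 * -(n : ℤ))) = B
    rw [div_eq_mul_inv]
    push_cast
    ring
  -- F (-n) → 0 and F n → f 0
  have h3 : Tendsto (fun n : ℕ => F (-(n : ℤ))) atTop (nhds 0) := hdecay.comp hnegZ
  have h4 : Tendsto (fun n : ℕ => F (n : ℤ)) atTop (nhds (f 0)) := by
    have h := hc.tendsto.comp hx0
    simpa [Function.comp_def, hF] using h
  -- the partial sums converge to f 0 / (1 - q^2)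
  have hlimP : Tendsto (fun n : ℕ => ∑ j ∈ Finset.Icc (-(n : ℤ)) (n : ℤ), u j) atTop
      (nhds (f 0 / (1 - q ^ 2))) := by
    have h := (h1.add h2).sub ((h3.sub h4).div_const (1 - q ^ 2))
    have hval : ((0 : ℝ) + 0) - ((0 : ℝ) - f 0) / (1 - q ^ 2) = f 0 / (1 - q ^ 2) := by
      ring
    rw [hval] at h
    exact h.congr fun n => (hpart n).symm
  -- exhaustion of ℤ by symmetric intervals
  have hFin : Tendsto (fun n : ℕ => Finset.Icc (-(n : ℤ)) (n : ℤ)) atTop atTop := by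
    apply Filter.tendsto_atTop_finset_of_monotone
    · intro a b hab
      apply Finset.Icc_subset_Icc <;> omega
    · intro x
      exact ⟨x.natAbs, by simp only [Finset.mem_Icc]; omega⟩
  have hts : ∑' j : ℤ, u j = f 0 / (1 - q ^ 2) :=
    tendsto_nhds_unique (hsu.hasSum.comp hFin) hlimP
  calc (1 - q ^ 2) * ∑' j : ℤ, q ^ (2 * j) * (Real.log (q ^ (2 * j)) * Box q f (q ^ (2 * j)))
      = (1 - q ^ 2) * ∑' j : ℤ, C * u j := by rw [tsum_congr key]
    _ = (1 - q ^ 2) * (C * ∑' j : ℤ, u j) := by rw [tsum_mul_left]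
    _ = (1 - q ^ 2) * (C * (f 0 / (1 - q ^ 2))) := by rw [hts]
    _ = (2 * q * Real.log q / (q - q⁻¹)) * f 0 := by
        have hqinv : 1 < q⁻¹ := (one_lt_inv₀ hq0).mpr hq1
        have hqq : q - q⁻¹ ≠ 0 := by nlinarith
        rw [hCdef]
        have hC1 : q ^ 2 - 1 ≠ 0 := by nlinarith
        have hA : (1 - (q ^ 2)⁻¹) = (q ^ 2 - 1) / q ^ 2 := by
          field_simp
        have hB : (q - q⁻¹) = (q ^ 2 - 1) / q := by
          field_simp
        rw [hA, hB, div_div_eq_mul_div, div_div_eq_mul_div]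
        field_simp
end
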